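/- In a closed symmetric monoidal category, if X is weakly dualizable (i.e. the canonical map X ⊗ DX → 𝓗om(X, X) is an isomorphism) and reflexive (i.e. the canonical map X → DDX is an isomorphism), then X is dualizable, meaning X is reflexive and the canonical map X ⊗ DX → D(X ⊗ DX) is an isomorphism. -/

import Mathlib

open CategoryTheory CategoryTheory.Limits MonoidalCategory MonoidalClosed

universe v u

variable {C : Type u} [Category.{v} C] [MonoidalCategory C] [SymmetricCategory C]
  [MonoidalClosed C]

/-- The dual `D F := 𝓗om(F, Σ)` with respect to the unit `Σ = 𝟙_ C`. -/
noncomputable def Dl (F : C) : C := (ihom F).obj (𝟙_ C)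

/-- The evaluation map `e : D X ⊗ X ⟶ Σ`, adjoint to the identity of `D X`. -/
noncomputable def ev' (X : C) : Dl X ⊗ X ⟶ 𝟙_ C :=
  (β_ (Dl X) X).hom ≫ (ihom.ev X).app (𝟙_ C)

/-- The canonical reflexivity map `X ⟶ D D X`, adjoint to the evaluation `D X ⊗ X ⟶ Σ`. -/
noncomputable def reflexMap (X : C) : X ⟶ Dl (Dl X) :=
  MonoidalClosed.curry (ev' X)

/-- The canonical map `X ⊗ D X ⟶ 𝓗om(X, X)`, adjoint to
`X ⊗ D X ⊗ X → X ⊗ Σ ≅ X` given by `id_X ⊗ e`. -/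
noncomputable def wdMap (X : C) : X ⊗ Dl X ⟶ (ihom X).obj X :=
  MonoidalClosed.curry
    ((β_ X (X ⊗ Dl X)).hom ≫ (α_ X (Dl X) X).hom ≫ (X ◁ ev' X) ≫ (ρ_ X).hom)

/-- The canonical morphism `D X ⊗ D Y ⟶ D (Y ⊗ X)`, adjoint to the pairing
`D X ⊗ D Y ⊗ Y ⊗ X ⟶ D X ⊗ Σ ⊗ X ≅ D X ⊗ X ⟶ Σ`. -/
noncomputable def pairMap (X Y : C) : Dl X ⊗ Dl Y ⟶ Dl (Y ⊗ X) :=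
  MonoidalClosed.curry ((β_ (Y ⊗ X) (Dl X ⊗ Dl Y)).hom ≫
    (α_ (Dl X) (Dl Y) (Y ⊗ X)).hom ≫
      (Dl X ◁ ((α_ (Dl Y) Y X).inv ≫ (ev' Y ▷ X) ≫ (λ_ X).hom)) ≫ ev' X)

/-- The canonical self-duality comparison map `X ⊗ D X ⟶ D D X ⊗ D X ⟶ D (X ⊗ D X)`. -/
noncomputable def selfDualMap (X : C) : X ⊗ Dl X ⟶ Dl (X ⊗ Dl X) :=
  (reflexMap X ▷ Dl X) ≫ pairMap (Dl X) X

/-! The coevaluation `𝟙 ⟶ X ⊗ D X` is the preimage of `id_X` under `X ⊗ D X ≅ 𝓗om(X, X)`. One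
triangle identity then holds by construction, and the other because maps into `D X` are determined
by their transposes, so `(X, D X)` is an exact pairing. Tensoring it with its swap `(D X, X)` pairs
`X ⊗ D X` with itself, `selfDualMap X` is the transpose of that pairing, and the transpose
`B' ⟶ D B` of any exact pairing `(B, B')` is invertible, with inverse given by bending `D B ⊗ B`
along the coevaluation. -/

section Transpose

variable {V : Type*} [Category V] [MonoidalCategory V] {A A' B B' : V}

def coevTranspose (η : 𝟙_ V ⟶ B ⊗ B') (e : A ⊗ B ⟶ 𝟙_ V) : A ⟶ B' :=
  (ρ_ A).inv ≫ A ◁ η ≫ (α_ A B B').inv ≫ e ▷ B' ≫ (λ_ B').hom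

lemma comp_coevTranspose (η : 𝟙_ V ⟶ B ⊗ B') (f : A' ⟶ A) (e : A ⊗ B ⟶ 𝟙_ V) :
    f ≫ coevTranspose η e = coevTranspose η (f ▷ B ≫ e) := by
  rw [coevTranspose, coevTranspose, rightUnitor_inv_naturality_assoc, ← whisker_exchange_assoc,
    associator_inv_naturality_left_assoc, comp_whiskerRight_assoc]

lemma coevTranspose_eq_id_iff (η : 𝟙_ V ⟶ B ⊗ B') (ε : B' ⊗ B ⟶ 𝟙_ V) :
    coevTranspose η ε = 𝟙 B' ↔
      B' ◁ η ≫ (α_ B' B B').inv ≫ ε ▷ B' = (ρ_ B').hom ≫ (λ_ B').inv := by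
  rw [← cancel_epi (ρ_ B').inv, ← cancel_mono (λ_ B').hom]
  simp [coevTranspose]

lemma coevTranspose_whiskerRight_comp (η : 𝟙_ V ⟶ B ⊗ B') (ε : B' ⊗ B ⟶ 𝟙_ V)
    (h : η ▷ B ≫ (α_ B B' B).hom ≫ B ◁ ε = (λ_ B).hom ≫ (ρ_ B).inv) (e : A ⊗ B ⟶ 𝟙_ V) :
    coevTranspose η e ▷ B ≫ ε = e := by
  calc coevTranspose η e ▷ B ≫ ε
      = 𝟙 _ ⊗≫ (A ◁ η) ▷ B ⊗≫ (e ▷ (B' ⊗ B) ≫ 𝟙_ V ◁ ε) ⊗≫ 𝟙 _ := by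
        rw [coevTranspose]; monoidal
    _ = 𝟙 _ ⊗≫ (A ◁ η) ▷ B ⊗≫ ((A ⊗ B) ◁ ε ≫ e ▷ 𝟙_ V) ⊗≫ 𝟙 _ := by
        rw [whisker_exchange]
    _ = 𝟙 _ ⊗≫ A ◁ (η ▷ B ≫ (α_ B B' B).hom ≫ B ◁ ε) ⊗≫ e := by
        monoidal
    _ = e := by
        rw [h]; monoidal

end Transpose

lemma whiskerRight_comp_ev' {A B : C} (f : A ⟶ Dl B) :
    f ▷ B ≫ ev' B = (β_ A B).hom ≫ uncurry f := by
  erw [ev', BraidedCategory.braiding_naturality_left_assoc, uncurry_eq]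
  rfl

lemma Dl.hom_ext {A B : C} {f g : A ⟶ Dl B} (h : f ▷ B ≫ ev' B = g ▷ B ≫ ev' B) : f = g := by
  rw [whiskerRight_comp_ev', whiskerRight_comp_ev', cancel_epi] at h
  exact uncurry_injective h

lemma reflexMap_whiskerRight_ev' (X : C) :
    reflexMap X ▷ Dl X ≫ ev' (Dl X) = (β_ X (Dl X)).hom ≫ ev' X := by
  rw [whiskerRight_comp_ev', reflexMap, uncurry_curry]

section WeaklyDualizable

variable (X : C) [IsIso (wdMap X)]

noncomputable def wdCoev : 𝟙_ C ⟶ X ⊗ Dl X :=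
  curry (ρ_ X).hom ≫ inv (wdMap X)

lemma wdCoev_evaluation_coevaluation :
    wdCoev X ▷ X ≫ (α_ X (Dl X) X).hom ≫ X ◁ ev' X = (λ_ X).hom ≫ (ρ_ X).inv := by
  have h : uncurry (wdCoev X ≫ wdMap X) = uncurry (curry (ρ_ X).hom) := by
    simp [wdCoev]
  rw [uncurry_curry, wdMap, uncurry_natural_left, uncurry_curry,
    BraidedCategory.braiding_naturality_right_assoc, braiding_tensorUnit_right,
    Category.assoc] at h
  rw [← cancel_epi ((ρ_ X).hom ≫ (λ_ X).inv), ← cancel_mono (ρ_ X).hom]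
  simpa using h

lemma coevTranspose_wdCoev_ev' : coevTranspose (wdCoev X) (ev' X) = 𝟙 (Dl X) :=
  Dl.hom_ext <| by
    rw [coevTranspose_whiskerRight_comp _ _ (wdCoev_evaluation_coevaluation X), id_whiskerRight,
      Category.id_comp]

noncomputable instance exactPairingOfIsIsoWdMap : ExactPairing X (Dl X) where
  coevaluation' := wdCoev X
  evaluation' := ev' X
  coevaluation_evaluation' :=
    (coevTranspose_eq_id_iff _ _).mp (coevTranspose_wdCoev_ev' X)
  evaluation_coevaluation' := wdCoev_evaluation_coevaluation X

noncomputable instance exactPairingDlOfIsIsoWdMap : ExactPairing (Dl X) X :=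
  BraidedCategory.exactPairing_swap X (Dl X)

end WeaklyDualizable

section Pairing

variable (B B' : C) [ExactPairing B B']

noncomputable def pairingToDl : B' ⟶ Dl B :=
  curry ((β_ B B').hom ≫ ε_ B B')

lemma pairingToDl_whiskerRight_ev' : pairingToDl B B' ▷ B ≫ ev' B = ε_ B B' := by
  rw [whiskerRight_comp_ev', pairingToDl, uncurry_curry, SymmetricCategory.symmetry_assoc]

instance isIso_pairingToDl : IsIso (pairingToDl B B') := by
  refine ⟨coevTranspose (η_ B B') (ev' B), ?_, Dl.hom_ext ?_⟩
  · rw [comp_coevTranspose, pairingToDl_whiskerRight_ev',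
      coevTranspose_eq_id_iff, ExactPairing.coevaluation_evaluation]
  · rw [comp_whiskerRight_assoc, pairingToDl_whiskerRight_ev',
      coevTranspose_whiskerRight_comp _ _ (ExactPairing.evaluation_coevaluation B B'),
      id_whiskerRight, Category.id_comp]

end Pairing

lemma selfDualMap_eq_pairingToDl (X : C) [IsIso (wdMap X)] :
    selfDualMap X = pairingToDl (X ⊗ Dl X) (X ⊗ Dl X) := by
  apply uncurry_injective
  erw [pairingToDl, uncurry_curry, selfDualMap, pairMap, uncurry_natural_left, uncurry_curry]
  rw [BraidedCategory.braiding_naturality_right_assoc, associator_naturality_left_assoc,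
    ← whisker_exchange_assoc, reflexMap_whiskerRight_ev', ExactPairing.tensor_evaluation]
  change _ = _ ≫ _ ⊗≫ X ◁ ev' X ▷ Dl X ⊗≫ (β_ X (Dl X)).hom ≫ ev' X
  monoidal

theorem isIso_selfDualMap (X : C) [IsIso (wdMap X)] : IsIso (selfDualMap X) := by
  rw [selfDualMap_eq_pairingToDl]
  infer_instance

/-- In a closed symmetric monoidal category, if `X` is weakly dualizable
(the canonical map `X ⊗ D X ⟶ 𝓗om(X, X)` is an isomorphism) and reflexive (the canonical map
`X ⟶ D D X` is an isomorphism), then `X` is dualizable: `X` is reflexive and the canonical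
map `X ⊗ D X ⟶ D (X ⊗ D X)` is an isomorphism (i.e. `X ⊗ D X` is self-dual). -/
theorem stmt1 (X : C) (hwd : IsIso (wdMap X)) (hrefl : IsIso (reflexMap X)) :
    IsIso (reflexMap X) ∧ IsIso (selfDualMap X) :=
  ⟨hrefl, isIso_selfDualMap X⟩
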